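/- Let w : ℝ → [0,∞) be a probability density supported on a compact set F, smooth on the interior of F, with |w^{(k)}(x)| ≤ C_k κ(x)^{1/2−k} for k = 0,1,2,3, where κ(x) = dist(x, ∂F). Let φ_Δ(x) = Δ^{-1} k(x/Δ) with k the semicircular kernel and Δ > 0. Then for every x with κ(x) > 2Δ, |w(x) − (φ_Δ * w)(x)| ≤ C Δ² κ(x)^{-3/2} for a constant C depending only on the C_k and k. -/

import Mathlib

open MeasureTheory

/-- The semicircular kernel `k(x) = (1/(2π))√((4−x²)₊)`. -/
noncomputable def semicircK (x : ℝ) : ℝ := (1 / (2 * Real.pi)) * Real.sqrt (max (4 - x ^ 2) 0)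

lemma semicircK_nonneg (x : ℝ) : 0 ≤ semicircK x := by
  unfold semicircK; positivity

lemma semicircK_cont : Continuous semicircK := by
  unfold semicircK
  exact continuous_const.mul (Real.continuous_sqrt.comp
    ((continuous_const.sub (continuous_pow 2)).max continuous_const))

lemma semicircK_even (x : ℝ) : semicircK (-x) = semicircK x := by
  simp [semicircK, neg_sq]

lemma semicircK_zero_of {x : ℝ} (h : 2 ≤ |x|) : semicircK x = 0 := by
  have h4 : 4 - x ^ 2 ≤ 0 := by nlinarith [sq_abs x]
  simp [semicircK, max_eq_right h4]

lemma semicircK_hcs : HasCompactSupport semicircK := by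
  apply HasCompactSupport.intro (isCompact_Icc (a := (-2:ℝ)) (b := 2))
  intro x hx
  apply semicircK_zero_of
  rw [Set.mem_Icc, not_and_or, not_le, not_le] at hx
  rcases hx with h | h
  · rw [abs_of_neg (by linarith)]; linarith
  · rw [abs_of_pos (by linarith)]; linarith

lemma semicircK_integrable : Integrable semicircK :=
  semicircK_cont.integrable_of_hasCompactSupport semicircK_hcs

lemma semicircK_eq (x : ℝ) :
    semicircK x = (1 / Real.pi) * Real.sqrt (max (1 - (x / 2) ^ 2) 0) := by
  have h1 : max (4 - x ^ 2) 0 = 4 * max (1 - (x / 2) ^ 2) 0 := by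
    rcases le_total (4 - x ^ 2) 0 with h | h
    · rw [max_eq_right h, max_eq_right (by nlinarith), mul_zero]
    · rw [max_eq_left h, max_eq_left (by nlinarith)]; ring
  rw [semicircK, h1, Real.sqrt_mul (by norm_num : (0:ℝ) ≤ 4),
    show Real.sqrt 4 = 2 by rw [show (4:ℝ) = 2 ^ 2 by norm_num, Real.sqrt_sq (by norm_num)]]
  have hπ : Real.pi ≠ 0 := Real.pi_ne_zero
  field_simp

lemma semicircK_integral : ∫ x, semicircK x = 1 := by
  have hsupp : ∀ x ∉ Set.Ioc (-2:ℝ) 2, semicircK x = 0 := by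
    intro x hx
    apply semicircK_zero_of
    rw [Set.mem_Ioc, not_and_or, not_lt, not_le] at hx
    rcases hx with h | h
    · rw [abs_of_nonpos (by linarith)]; linarith
    · rw [abs_of_pos (by linarith)]; linarith
  rw [← setIntegral_eq_integral_of_forall_compl_eq_zero hsupp,
    ← intervalIntegral.integral_of_le (by norm_num : (-2:ℝ) ≤ 2)]
  have h1 : ∀ x : ℝ, semicircK x
      = (1 / Real.pi) * ((fun u : ℝ => Real.sqrt (max (1 - u ^ 2) 0)) (x / 2)) := by
    intro x; exact semicircK_eq x
  calc ∫ x in (-2:ℝ)..2, semicircK x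
      = ∫ x in (-2:ℝ)..2, (1 / Real.pi) * ((fun u : ℝ => Real.sqrt (max (1 - u ^ 2) 0)) (x / 2)) := by
        exact intervalIntegral.integral_congr (fun x _ => h1 x)
    _ = (1 / Real.pi) * ∫ x in (-2:ℝ)..2, (fun u : ℝ => Real.sqrt (max (1 - u ^ 2) 0)) (x / 2) := by
        exact intervalIntegral.integral_const_mul _ _
    _ = (1 / Real.pi) * ((2:ℝ) • ∫ u in ((-2:ℝ)/2)..((2:ℝ)/2), Real.sqrt (max (1 - u ^ 2) 0)) := by
        rw [intervalIntegral.integral_comp_div (fun u : ℝ => Real.sqrt (max (1 - u ^ 2) 0)) (by norm_num : (2:ℝ) ≠ 0)]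
    _ = (1 / Real.pi) * (2 * ∫ u in (-1:ℝ)..1, Real.sqrt (1 - u ^ 2)) := by
        norm_num
        apply intervalIntegral.integral_congr
        intro u hu
        rw [Set.uIcc_of_le (by norm_num : (-1:ℝ) ≤ 1), Set.mem_Icc] at hu
        show Real.sqrt (max (1 - u ^ 2) 0) = Real.sqrt (1 - u ^ 2)
        rw [max_eq_left (by nlinarith [hu.1, hu.2])]
    _ = 1 := by
        rw [integral_sqrt_one_sub_sq]
        field_simp

lemma phi_integral {Δ : ℝ} (hΔ : 0 < Δ) (x : ℝ) :
    ∫ t : ℝ, Δ⁻¹ * semicircK ((x - t) / Δ) = 1 := by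
  calc ∫ t : ℝ, Δ⁻¹ * semicircK ((x - t) / Δ)
      = ∫ t : ℝ, (fun u : ℝ => (fun s : ℝ => Δ⁻¹ * semicircK (s / Δ)) (x + u)) (-t) := rfl
    _ = ∫ t : ℝ, (fun s : ℝ => Δ⁻¹ * semicircK (s / Δ)) (x + t) :=
        integral_neg_eq_self (fun u : ℝ => (fun s : ℝ => Δ⁻¹ * semicircK (s / Δ)) (x + u)) volume
    _ = ∫ s : ℝ, Δ⁻¹ * semicircK (s / Δ) :=
        integral_add_left_eq_self (fun s : ℝ => Δ⁻¹ * semicircK (s / Δ)) x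
    _ = Δ⁻¹ * ∫ s : ℝ, semicircK (s / Δ) := integral_const_mul _ _
    _ = Δ⁻¹ * (|Δ| • ∫ s : ℝ, semicircK s) := by
        rw [MeasureTheory.Measure.integral_comp_div]
    _ = 1 := by
        rw [semicircK_integral, abs_of_pos hΔ, smul_eq_mul, mul_one,
          inv_mul_cancel₀ (ne_of_gt hΔ)]

lemma phi_moment {Δ : ℝ} (hΔ : 0 < Δ) (x : ℝ) :
    ∫ t : ℝ, Δ⁻¹ * semicircK ((x - t) / Δ) * (t - x) = 0 := by
  set h : ℝ → ℝ := fun s => Δ⁻¹ * semicircK (s / Δ) * s with hh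
  have hodd : ∀ s, h (-s) = -h s := by
    intro s
    simp only [hh, neg_div, semicircK_even]
    ring
  have hint0 : ∫ s : ℝ, h s = 0 := by
    have h1 : ∫ s : ℝ, h (-s) = ∫ s : ℝ, h s := integral_neg_eq_self h volume
    simp_rw [hodd] at h1
    rw [integral_neg] at h1
    linarith
  calc ∫ t : ℝ, Δ⁻¹ * semicircK ((x - t) / Δ) * (t - x)
      = ∫ t : ℝ, -h (x - t) := by
        congr 1; funext t; simp only [hh]; ring
    _ = -∫ t : ℝ, h (x - t) := integral_neg _
    _ = -∫ t : ℝ, (fun s => h (x + s)) (-t) := rfl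
    _ = -∫ t : ℝ, h (x + t) := by rw [integral_neg_eq_self (fun s => h (x + s)) volume]
    _ = -∫ s : ℝ, h s := by rw [integral_add_left_eq_self h x]
    _ = 0 := by rw [hint0, neg_zero]


/-- interior smoothing-bias bound. If `w` is a probability density supported
on a compact `F`, smooth in the interior with `|w⁽ᵏ⁾(x)| ≤ C_k κ(x)^{1/2−k}` for
`k = 0,…,3` (`κ(x) = dist(x, ∂F)`), and `φ_Δ(x) = Δ⁻¹ k(x/Δ)` with `k` the semicircular
kernel, then there is `C` (depending only on the `C_k` and `k`) with
`|w(x) − (φ_Δ * w)(x)| ≤ C Δ² κ(x)^{−3/2}` whenever `κ(x) > 2Δ`. -/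
theorem kernel_smoothing_bias_interior
    (F : Set ℝ) (hF : IsCompact F)
    (w : ℝ → ℝ) (hw0 : ∀ x, 0 ≤ w x) (hw1 : ∫ x, w x = 1)
    (hsupp : Function.support w ⊆ F)
    (hsmooth : ContDiffOn ℝ (⊤ : ℕ∞) w (interior F))
    (Ck : Fin 4 → ℝ)
    (hderiv : ∀ k : Fin 4, ∀ x ∈ interior F,
      |iteratedDeriv (k : ℕ) w x| ≤
        Ck k * Metric.infDist x (frontier F) ^ ((1 : ℝ) / 2 - ((k : ℕ) : ℝ))) :
    ∃ C : ℝ, 0 < C ∧ ∀ Δ : ℝ, 0 < Δ → ∀ x : ℝ,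
      2 * Δ < Metric.infDist x (frontier F) →
      |w x - ∫ t : ℝ, Δ⁻¹ * semicircK ((x - t) / Δ) * w t| ≤
        C * Δ ^ 2 * Metric.infDist x (frontier F) ^ (-(3 : ℝ) / 2) := by
  classical
  set B0 := |Ck 0| + 1 with hB0
  set B2 := |Ck 2| + 1 with hB2
  have hB0pos : 0 < B0 := by positivity
  have hB2pos : 0 < B2 := by positivity
  refine ⟨48 * B0 + 12 * B2, by positivity, ?_⟩
  intro Δ hΔ x hx
  set κ := Metric.infDist x (frontier F) with hκdef
  have hκpos : 0 < κ := lt_trans (by positivity) hx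
  have hκ32 : (0:ℝ) < κ ^ (-(3:ℝ)/2) := Real.rpow_pos_of_pos hκpos _
  have hphi0 : ∀ t : ℝ, 2 * Δ ≤ |x - t| → Δ⁻¹ * semicircK ((x - t) / Δ) = 0 := by
    intro t ht
    have h2 : 2 ≤ |(x - t) / Δ| := by
      rw [abs_div, abs_of_pos hΔ, le_div_iff₀ hΔ]
      linarith
    rw [semicircK_zero_of h2, mul_zero]
  have hphinn : ∀ t : ℝ, 0 ≤ Δ⁻¹ * semicircK ((x - t) / Δ) :=
    fun t => mul_nonneg (by positivity) (semicircK_nonneg _)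
  have hout : ∀ t ∉ Metric.closedBall x (2 * Δ), 2 * Δ ≤ |x - t| := by
    intro t ht
    rw [Metric.mem_closedBall, not_le, Real.dist_eq] at ht
    rw [abs_sub_comm]
    linarith
  have hball : ∀ y ∈ Metric.closedBall x (2 * Δ), y ∉ frontier F := by
    intro y hy hyF
    have h1 : κ ≤ Metric.infDist y (frontier F) + dist x y :=
      Metric.infDist_le_infDist_add_dist
    rw [Metric.infDist_zero_of_mem hyF, zero_add] at h1
    rw [Metric.mem_closedBall] at hy
    rw [dist_comm] at h1
    linarith
  have hxmem : x ∈ Metric.closedBall x (2 * Δ) := Metric.mem_closedBall_self (by positivity)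
  have hRHSnn : (0:ℝ) ≤ (48 * B0 + 12 * B2) * Δ ^ 2 * κ ^ (-(3:ℝ)/2) := by positivity
  by_cases hxF : x ∈ interior F
  swap
  · -- x is outside the closure of F : both terms vanish
    have hxnc : x ∉ closure F := by
      intro hc
      rw [closure_eq_interior_union_frontier] at hc
      rcases hc with hc | hc
      · exact hxF hc
      · exact hball x hxmem hc
    have hsub : Metric.closedBall x (2 * Δ) ⊆ (closure F)ᶜ := by
      apply IsPreconnected.subset_left_of_subset_union
        (isOpen_compl_iff.mpr isClosed_closure) isOpen_interior
        (disjoint_compl_left.mono_right interior_subset_closure)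
        ?_ ⟨x, hxmem, hxnc⟩ (convex_closedBall x (2 * Δ)).isPreconnected
      intro y hy
      by_cases hyc : y ∈ closure F
      · rw [closure_eq_interior_union_frontier] at hyc
        rcases hyc with hyc | hyc
        · exact Or.inr hyc
        · exact absurd hyc (hball y hy)
      · exact Or.inl hyc
    have hwz : ∀ t ∈ Metric.closedBall x (2 * Δ), w t = 0 := by
      intro t ht
      by_contra hwt
      exact (hsub ht) (subset_closure (hsupp (Function.mem_support.mpr hwt)))
    have hint : ∀ t : ℝ, Δ⁻¹ * semicircK ((x - t) / Δ) * w t = 0 := by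
      intro t
      by_cases ht : t ∈ Metric.closedBall x (2 * Δ)
      · rw [hwz t ht, mul_zero]
      · rw [hphi0 t (hout t ht), zero_mul]
    have hI0 : (∫ t : ℝ, Δ⁻¹ * semicircK ((x - t) / Δ) * w t) = 0 := by
      have he : (fun t : ℝ => Δ⁻¹ * semicircK ((x - t) / Δ) * w t) = fun _ : ℝ => (0:ℝ) :=
        funext hint
      rw [he, integral_zero]
    rw [hI0, hwz x hxmem]
    simpa using hRHSnn
  · -- x is an interior point
    have hBsub : Metric.closedBall x (2 * Δ) ⊆ interior F := by
      apply IsPreconnected.subset_left_of_subset_union isOpen_interior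
        (isOpen_compl_iff.mpr isClosed_closure)
        (disjoint_compl_right.mono_left interior_subset_closure)
        ?_ ⟨x, hxmem, hxF⟩ (convex_closedBall x (2 * Δ)).isPreconnected
      intro y hy
      by_cases hyc : y ∈ closure F
      · rw [closure_eq_interior_union_frontier] at hyc
        rcases hyc with hyc | hyc
        · exact Or.inl hyc
        · exact absurd hyc (hball y hy)
      · exact Or.inr hyc
    have hUopen : IsOpen (interior F) := isOpen_interior
    have hwd : ∀ y ∈ interior F, DifferentiableAt ℝ w y := fun y hy =>
      (((hsmooth y hy).contDiffAt (hUopen.mem_nhds hy)).differentiableAt (by simp))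
    have hsm1 : ContDiffOn ℝ (⊤ : ℕ∞) (deriv w) (interior F) :=
      hsmooth.deriv_of_isOpen hUopen (by simp)
    have hw1d : ∀ y ∈ interior F, DifferentiableAt ℝ (deriv w) y := fun y hy =>
      (((hsm1 y hy).contDiffAt (hUopen.mem_nhds hy)).differentiableAt (by simp))
    have hd0 : ∀ y ∈ interior F, |w y| ≤ B0 * Metric.infDist y (frontier F) ^ ((1:ℝ)/2) := by
      intro y hy
      have h := hderiv 0 y hy
      have hc0 : ((0 : Fin 4) : ℕ) = 0 := rfl
      rw [hc0, iteratedDeriv_zero] at h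
      rw [show (1:ℝ)/2 - ((0:ℕ):ℝ) = (1:ℝ)/2 by norm_num] at h
      refine h.trans ?_
      apply mul_le_mul_of_nonneg_right _
        (Real.rpow_nonneg Metric.infDist_nonneg _)
      calc Ck 0 ≤ |Ck 0| := le_abs_self _
        _ ≤ B0 := by rw [hB0]; linarith
    have hd2 : ∀ y ∈ interior F,
        |deriv (deriv w) y| ≤ B2 * Metric.infDist y (frontier F) ^ (-(3:ℝ)/2) := by
      intro y hy
      have h := hderiv 2 y hy
      have hc2 : ((2 : Fin 4) : ℕ) = 2 := rfl
      rw [hc2] at h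
      have hid2 : iteratedDeriv 2 w = deriv (deriv w) := by
        rw [iteratedDeriv_succ, iteratedDeriv_one]
      rw [hid2] at h
      rw [show (1:ℝ)/2 - ((2:ℕ):ℝ) = -(3:ℝ)/2 by norm_num] at h
      refine h.trans ?_
      apply mul_le_mul_of_nonneg_right _
        (Real.rpow_nonneg Metric.infDist_nonneg _)
      calc Ck 2 ≤ |Ck 2| := le_abs_self _
        _ ≤ B2 := by rw [hB2]; linarith
    have hκy_ub : ∀ y ∈ Metric.closedBall x (2*Δ),
        Metric.infDist y (frontier F) ≤ κ + 2*Δ := by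
      intro y hy
      have h1 : Metric.infDist y (frontier F) ≤ κ + dist y x :=
        Metric.infDist_le_infDist_add_dist
      rw [Metric.mem_closedBall] at hy
      linarith
    have hκy_lb : ∀ y ∈ Metric.closedBall x (2*Δ),
        κ - 2*Δ ≤ Metric.infDist y (frontier F) := by
      intro y hy
      have h1 : κ ≤ Metric.infDist y (frontier F) + dist x y :=
        Metric.infDist_le_infDist_add_dist
      rw [Metric.mem_closedBall] at hy
      rw [dist_comm] at h1
      linarith
    have key : ∀ f : ℝ → ℝ, ContinuousOn f (interior F) →
        Integrable (fun t => Δ⁻¹ * semicircK ((x - t) / Δ) * f t) := by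
      intro f hf
      apply Continuous.integrable_of_hasCompactSupport
      · rw [continuous_iff_continuousAt]
        intro p
        by_cases hp : p ∈ interior F
        · have h1 : ContinuousAt (fun t => Δ⁻¹ * semicircK ((x - t) / Δ)) p :=
            (continuous_const.mul (semicircK_cont.comp
              ((continuous_const.sub continuous_id).div_const Δ))).continuousAt
          exact h1.mul ((hf p hp).continuousAt (hUopen.mem_nhds hp))
        · have hp' : p ∈ (Metric.closedBall x (2 * Δ))ᶜ := fun h => hp (hBsub h)
          have hev : ∀ᶠ t in nhds p,
              (fun _ : ℝ => (0:ℝ)) t = (fun t => Δ⁻¹ * semicircK ((x - t) / Δ) * f t) t := by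
            filter_upwards [(Metric.isClosed_closedBall).isOpen_compl.mem_nhds hp'] with t ht
            rw [hphi0 t (hout t ht), zero_mul]
          exact continuousAt_const.congr hev
      · apply HasCompactSupport.intro (isCompact_closedBall x (2 * Δ))
        intro t ht
        rw [hphi0 t (hout t ht), zero_mul]
    have keybd : ∀ (f : ℝ → ℝ) (M : ℝ), ContinuousOn f (interior F) →
        (∀ t ∈ Metric.closedBall x (2 * Δ), |f t| ≤ M) →
        |∫ t : ℝ, Δ⁻¹ * semicircK ((x - t) / Δ) * f t| ≤ M := by
      intro f M hf hM
      have hint := key f hf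
      have hintM : Integrable (fun t : ℝ => Δ⁻¹ * semicircK ((x - t) / Δ) * M) :=
        key (fun _ => M) continuousOn_const
      calc |∫ t : ℝ, Δ⁻¹ * semicircK ((x - t) / Δ) * f t|
          ≤ ∫ t : ℝ, |Δ⁻¹ * semicircK ((x - t) / Δ) * f t| := by
            simpa only [Real.norm_eq_abs] using
              norm_integral_le_integral_norm (fun t : ℝ => Δ⁻¹ * semicircK ((x - t) / Δ) * f t)
        _ ≤ ∫ t : ℝ, Δ⁻¹ * semicircK ((x - t) / Δ) * M := by
            apply integral_mono hint.abs hintM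
            intro t
            by_cases ht : t ∈ Metric.closedBall x (2 * Δ)
            · show |Δ⁻¹ * semicircK ((x - t) / Δ) * f t| ≤ _
              rw [abs_mul, abs_of_nonneg (hphinn t)]
              exact mul_le_mul_of_nonneg_left (hM t ht) (hphinn t)
            · show |Δ⁻¹ * semicircK ((x - t) / Δ) * f t| ≤ _
              rw [hphi0 t (hout t ht)]
              simp only [zero_mul, abs_zero]
              exact mul_nonneg (hphinn t) ((abs_nonneg _).trans (hM x hxmem))
        _ = (∫ t : ℝ, Δ⁻¹ * semicircK ((x - t) / Δ)) * M :=
            integral_mul_const M _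
        _ = M := by rw [phi_integral hΔ x, one_mul]
    have hconv : w x - (∫ t : ℝ, Δ⁻¹ * semicircK ((x - t) / Δ) * w t)
        = ∫ t : ℝ, Δ⁻¹ * semicircK ((x - t) / Δ) * (w x - w t) := by
      have h1 : ∫ t : ℝ, Δ⁻¹ * semicircK ((x - t) / Δ) * (w x - w t)
          = (∫ t : ℝ, Δ⁻¹ * semicircK ((x - t) / Δ) * w x)
            - ∫ t : ℝ, Δ⁻¹ * semicircK ((x - t) / Δ) * w t := by
        rw [← integral_sub (key (fun _ => w x) continuousOn_const) (key w hsmooth.continuousOn)]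
        congr 1; funext t; ring
      rw [h1]
      congr 1
      rw [integral_mul_const (w x) (fun t : ℝ => Δ⁻¹ * semicircK ((x - t) / Δ)),
        phi_integral hΔ x, one_mul]
    rcases le_or_gt κ (4 * Δ) with hκ4 | hκ4
    · -- trivial regime
      have hwx : |w x| ≤ B0 * κ ^ ((1:ℝ)/2) := hd0 x hxF
      have hwball : ∀ t ∈ Metric.closedBall x (2*Δ), |w t| ≤ B0 * (2*κ) ^ ((1:ℝ)/2) := by
        intro t ht
        refine (hd0 t (hBsub ht)).trans ?_
        apply mul_le_mul_of_nonneg_left _ hB0pos.le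
        apply Real.rpow_le_rpow Metric.infDist_nonneg _ (by norm_num)
        have := hκy_ub t ht
        linarith
      have hconvbd : |∫ t : ℝ, Δ⁻¹ * semicircK ((x - t) / Δ) * w t| ≤ B0 * (2*κ) ^ ((1:ℝ)/2) :=
        keybd w _ hsmooth.continuousOn hwball
      have h2κ : (2*κ) ^ ((1:ℝ)/2) ≤ 2 * κ ^ ((1:ℝ)/2) := by
        rw [Real.mul_rpow (by norm_num) hκpos.le]
        apply mul_le_mul_of_nonneg_right _ (Real.rpow_nonneg hκpos.le _)
        calc (2:ℝ) ^ ((1:ℝ)/2) ≤ 2 ^ (1:ℝ) :=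
              Real.rpow_le_rpow_of_exponent_le (by norm_num) (by norm_num)
          _ = 2 := Real.rpow_one 2
      have hb1 : |w x - ∫ t : ℝ, Δ⁻¹ * semicircK ((x - t) / Δ) * w t|
          ≤ 3 * B0 * κ ^ ((1:ℝ)/2) := by
        have habs : |w x - ∫ t : ℝ, Δ⁻¹ * semicircK ((x - t) / Δ) * w t|
            ≤ |w x| + |∫ t : ℝ, Δ⁻¹ * semicircK ((x - t) / Δ) * w t| := by
          rw [sub_eq_add_neg]
          refine (abs_add_le _ _).trans ?_
          rw [abs_neg]
        have h3 : B0 * (2*κ) ^ ((1:ℝ)/2) ≤ 2 * B0 * κ ^ ((1:ℝ)/2) := by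
          calc B0 * (2*κ) ^ ((1:ℝ)/2) ≤ B0 * (2 * κ ^ ((1:ℝ)/2)) :=
                mul_le_mul_of_nonneg_left h2κ hB0pos.le
            _ = 2 * B0 * κ ^ ((1:ℝ)/2) := by ring
        linarith
      have hhalf : κ ^ ((1:ℝ)/2) = κ ^ (2:ℕ) * κ ^ (-(3:ℝ)/2) := by
        rw [← Real.rpow_natCast κ 2, ← Real.rpow_add hκpos]
        norm_num
      have hκ2 : κ ^ (2:ℕ) ≤ 16 * Δ^2 := by
        calc κ ^ 2 ≤ (4*Δ)^2 := pow_le_pow_left₀ hκpos.le hκ4 2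
          _ = 16 * Δ^2 := by ring
      refine hb1.trans ?_
      rw [hhalf]
      have e1 : 3 * B0 * (κ^(2:ℕ) * κ^(-(3:ℝ)/2)) ≤ 3 * B0 * (16 * Δ^2 * κ^(-(3:ℝ)/2)) :=
        mul_le_mul_of_nonneg_left (mul_le_mul_of_nonneg_right hκ2 hκ32.le) (by positivity)
      have e2 : (0:ℝ) ≤ 12 * B2 * Δ^2 * κ^(-(3:ℝ)/2) := by positivity
      nlinarith [e1, e2]
    · -- Taylor regime
      set M2 := B2 * (κ/2) ^ (-(3:ℝ)/2) with hM2
      have hM2nn : 0 ≤ M2 :=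
        mul_nonneg hB2pos.le (Real.rpow_nonneg (by positivity) _)
      have hd2' : ∀ y ∈ Metric.closedBall x (2*Δ), |deriv (deriv w) y| ≤ M2 := by
        intro y hy
        refine (hd2 y (hBsub hy)).trans ?_
        apply mul_le_mul_of_nonneg_left _ hB2pos.le
        apply Real.rpow_le_rpow_of_nonpos (by positivity) _ (by norm_num)
        have := hκy_lb y hy
        linarith
      have hlip : ∀ t ∈ Metric.closedBall x (2*Δ),
          |deriv w t - deriv w x| ≤ M2 * (2*Δ) := by
        intro t ht
        have h := Convex.norm_image_sub_le_of_norm_hasDerivWithin_le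
          (f := deriv w) (f' := deriv (deriv w)) (s := Metric.closedBall x (2*Δ)) (C := M2)
          (fun z hz => ((hw1d z (hBsub hz)).hasDerivAt).hasDerivWithinAt)
          (fun z hz => by rw [Real.norm_eq_abs]; exact hd2' z hz)
          (convex_closedBall x (2*Δ)) hxmem ht
        rw [Real.norm_eq_abs, Real.norm_eq_abs] at h
        refine h.trans ?_
        apply mul_le_mul_of_nonneg_left _ hM2nn
        rw [← Real.dist_eq]
        exact Metric.mem_closedBall.mp ht
      have hf1 : ContinuousOn (fun t => w x - w t + (t - x) * deriv w x) (interior F) := by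
        apply ContinuousOn.add
        · exact continuousOn_const.sub hsmooth.continuousOn
        · exact (continuousOn_id.sub continuousOn_const).mul continuousOn_const
      have htay : ∀ t ∈ Metric.closedBall x (2*Δ),
          |w x - w t + (t - x) * deriv w x| ≤ 4 * M2 * Δ^2 := by
        intro t ht
        have hg : ∀ z ∈ Metric.closedBall x (2*Δ),
            HasDerivWithinAt (fun s => w s - s * deriv w x)
              (deriv w z - deriv w x) (Metric.closedBall x (2*Δ)) z := by
          intro z hz
          have h1 := ((hwd z (hBsub hz)).hasDerivAt).sub
            ((hasDerivAt_id z).mul_const (deriv w x))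
          have h2 := h1.hasDerivWithinAt (s := Metric.closedBall x (2*Δ))
          simp only [id, one_mul] at h2
          exact h2
        have h := Convex.norm_image_sub_le_of_norm_hasDerivWithin_le hg
          (fun z hz => by rw [Real.norm_eq_abs]; exact hlip z hz)
          (convex_closedBall x (2*Δ)) hxmem ht
        rw [Real.norm_eq_abs, Real.norm_eq_abs] at h
        have he : w x - w t + (t - x) * deriv w x
            = -((w t - t * deriv w x) - (w x - x * deriv w x)) := by ring
        rw [he, abs_neg]
        refine h.trans ?_
        have habs : |t - x| ≤ 2*Δ := by
          rw [← Real.dist_eq]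
          exact Metric.mem_closedBall.mp ht
        calc M2 * (2*Δ) * |t - x| ≤ M2 * (2*Δ) * (2*Δ) :=
              mul_le_mul_of_nonneg_left habs (by positivity)
          _ = 4 * M2 * Δ^2 := by ring
      have hmom : ∫ t : ℝ, Δ⁻¹ * semicircK ((x - t) / Δ) * ((t - x) * deriv w x) = 0 := by
        calc ∫ t : ℝ, Δ⁻¹ * semicircK ((x - t) / Δ) * ((t - x) * deriv w x)
            = ∫ t : ℝ, (Δ⁻¹ * semicircK ((x - t) / Δ) * (t - x)) * deriv w x := by
              congr 1; funext t; ring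
          _ = (∫ t : ℝ, Δ⁻¹ * semicircK ((x - t) / Δ) * (t - x)) * deriv w x :=
              integral_mul_const _ _
          _ = 0 := by rw [phi_moment hΔ x, zero_mul]
      have hsplit : ∫ t : ℝ, Δ⁻¹ * semicircK ((x - t) / Δ) * (w x - w t)
          = ∫ t : ℝ, Δ⁻¹ * semicircK ((x - t) / Δ) * (w x - w t + (t - x) * deriv w x) := by
        calc ∫ t : ℝ, Δ⁻¹ * semicircK ((x - t) / Δ) * (w x - w t)
            = ∫ t : ℝ, (Δ⁻¹ * semicircK ((x - t) / Δ) * (w x - w t + (t - x) * deriv w x)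
                - Δ⁻¹ * semicircK ((x - t) / Δ) * ((t - x) * deriv w x)) := by
              congr 1; funext t; ring
          _ = (∫ t : ℝ, Δ⁻¹ * semicircK ((x - t) / Δ) * (w x - w t + (t - x) * deriv w x))
                - ∫ t : ℝ, Δ⁻¹ * semicircK ((x - t) / Δ) * ((t - x) * deriv w x) :=
              integral_sub (key _ hf1)
                (key (fun t => (t - x) * deriv w x)
                  ((continuousOn_id.sub continuousOn_const).mul continuousOn_const))
          _ = ∫ t : ℝ, Δ⁻¹ * semicircK ((x - t) / Δ) * (w x - w t + (t - x) * deriv w x) := by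
              rw [hmom, sub_zero]
      rw [hconv, hsplit]
      have hbd := keybd (fun t => w x - w t + (t - x) * deriv w x) (4 * M2 * Δ^2) hf1 htay
      refine hbd.trans ?_
      have hhalfpow : (κ/2) ^ (-(3:ℝ)/2) ≤ 3 * κ ^ (-(3:ℝ)/2) := by
        have h2 : (κ/2) ^ (-(3:ℝ)/2) = κ ^ (-(3:ℝ)/2) * (2:ℝ) ^ ((3:ℝ)/2) := by
          rw [div_eq_mul_inv, Real.mul_rpow hκpos.le (by positivity)]
          congr 1
          rw [show ((2:ℝ)⁻¹) = (2:ℝ) ^ (-1:ℝ) by rw [Real.rpow_neg_one],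
            ← Real.rpow_mul (by norm_num)]
          norm_num
        have h3 : (2:ℝ) ^ ((3:ℝ)/2) ≤ 3 := by
          have ha : (0:ℝ) ≤ (2:ℝ) ^ ((3:ℝ)/2) := Real.rpow_nonneg (by norm_num) _
          have hsq : ((2:ℝ) ^ ((3:ℝ)/2))^(2:ℕ) = 8 := by
            rw [← Real.rpow_natCast ((2:ℝ)^((3:ℝ)/2)) 2, ← Real.rpow_mul (by norm_num)]
            norm_num
          nlinarith
        calc (κ/2)^(-(3:ℝ)/2) = κ^(-(3:ℝ)/2) * 2^((3:ℝ)/2) := h2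
          _ ≤ κ^(-(3:ℝ)/2) * 3 := mul_le_mul_of_nonneg_left h3 hκ32.le
          _ = 3 * κ^(-(3:ℝ)/2) := by ring
      calc 4 * M2 * Δ^2 = 4 * B2 * (κ/2)^(-(3:ℝ)/2) * Δ^2 := by rw [hM2]; ring
        _ ≤ 4 * B2 * (3 * κ^(-(3:ℝ)/2)) * Δ^2 := by
            apply mul_le_mul_of_nonneg_right _ (sq_nonneg Δ)
            exact mul_le_mul_of_nonneg_left hhalfpow (by positivity)
        _ = 12 * B2 * Δ^2 * κ^(-(3:ℝ)/2) := by ring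
        _ ≤ (48 * B0 + 12 * B2) * Δ^2 * κ^(-(3:ℝ)/2) := by
            have hnn : (0:ℝ) ≤ 48 * B0 * (Δ^2 * κ^(-(3:ℝ)/2)) :=
              mul_nonneg (by linarith [hB0pos]) (mul_nonneg (sq_nonneg Δ) hκ32.le)
            have hexp : (48 * B0 + 12 * B2) * Δ^2 * κ^(-(3:ℝ)/2)
                = 48 * B0 * (Δ^2 * κ^(-(3:ℝ)/2)) + 12 * B2 * Δ^2 * κ^(-(3:ℝ)/2) := by ring
            rw [hexp]
            linarith [hnn]
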